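/- arXiv:2112.12736 — 6 statements merged into one kernel-verified Lean document; each statement's English description precedes it below -/
import Mathlib

section
/- Let L be a Lie algebra over ℂ with elements α_k for integers k ≥ -1 satisfying [α_k, α_ℓ] = (k - ℓ)·α_{k+ℓ} for all k, ℓ ≥ -1 (with brackets landing in the span of the α's). For each natural number m define the formal (finite-in-each-component, or suitably convergent) combination α̃_m := - ∑_{k ≥ -1} ((-m)^{k+1} / (k+1)!) · α_k, interpreted in the completion of L with respect to the grading by k. Then [α̃_m, α̃_n] = (m - n)·α̃_{m+n} for all m, n ≥ 0. -/
open Finset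

/- The completion of the Lie algebra spanned by `α_k`, `k ≥ -1`, with
`[α_k, α_ℓ] = (k-ℓ)·α_{k+ℓ}`: its elements are formal series `∑_{k ≥ -1} c_k α_k`,
encoded as coefficient functions `ℕ → ℂ` via the shift `j ↦ (coefficient of α_{j-1})`.
The bracket is well defined because for each total degree only finitely many pairs
contribute. -/

/-- The bracket of two formal series `c = ∑_{k≥-1} c_k α_k`, `d = ∑_{k≥-1} d_k α_k`:
the coefficient of `α_k` in `[c,d]` is `∑_{k₁+k₂=k, k₁,k₂≥-1} c_{k₁} d_{k₂} (k₁-k₂)`;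
in the shifted indices `j = k+1`, `j_i = k_i+1` this reads
`[c,d]_j = ∑_{j₁+j₂=j+1} c_{j₁} d_{j₂} (j₁-j₂)`. -/
noncomputable def bracket (c d : ℕ → ℂ) : ℕ → ℂ := fun j =>
  ∑ p ∈ range (j+2), c p * d (j+1-p) * ((p : ℂ) - ((j+1-p : ℕ) : ℂ))

/-- The element `α̃_m = -∑_{k ≥ -1} ((-m)^{k+1}/(k+1)!)·α_k` of the completion
(in shifted index `j = k+1`, its `j`-th coefficient is `-(-m)^j/j!`). -/
noncomputable def atilde (m : ℕ) : ℕ → ℂ := fun j =>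
  -((-(m : ℂ)) ^ j / (j.factorial : ℂ))

/-! With `expCoeff x j = x ^ j / j!`, the Taylor coefficients of `exp (x t)`, one has
`atilde m = -expCoeff (-m)`. Weighting the Cauchy product of `expCoeff x` and `expCoeff y` by the
first index pulls down a factor `x`, because `j · x ^ j / j! = x · x ^ (j - 1) / (j - 1)!`, and
leaves `expCoeff (x + y)` by the binomial theorem; weighting by the second index likewise gives
`y`. Hence `[expCoeff x, expCoeff y] = (x - y) · expCoeff (x + y)`. -/

open Nat

noncomputable def expCoeff (x : ℂ) (n : ℕ) : ℂ := x ^ n / n !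

lemma sum_antidiagonal_expCoeff_mul (x y : ℂ) (n : ℕ) :
    ∑ ij ∈ antidiagonal n, expCoeff x ij.1 * expCoeff y ij.2 = expCoeff (x + y) n := by
  rw [expCoeff, (Commute.all x y).add_pow', sum_div]
  refine sum_congr rfl fun ⟨i, j⟩ hij => ?_
  obtain rfl : i + j = n := mem_antidiagonal.mp hij
  have hchoose : ((i + j).choose j : ℂ) ≠ 0 := Nat.cast_ne_zero.mpr (choose_pos le_add_self).ne'
  rw [nsmul_eq_mul, ← add_choose_mul_factorial_mul_factorial, choose_symm_add, expCoeff, expCoeff]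
  push_cast
  field_simp

lemma succ_mul_expCoeff_succ (x : ℂ) (n : ℕ) :
    ((n + 1 : ℕ) : ℂ) * expCoeff x (n + 1) = x * expCoeff x n := by
  rw [expCoeff, expCoeff, factorial_succ]
  push_cast
  field_simp
  ring

lemma sum_antidiagonal_fst_mul_expCoeff_mul (x y : ℂ) (n : ℕ) :
    ∑ ij ∈ antidiagonal (n + 1), (ij.1 : ℂ) * (expCoeff x ij.1 * expCoeff y ij.2)
      = x * expCoeff (x + y) n := by
  rw [Nat.sum_antidiagonal_succ, ← sum_antidiagonal_expCoeff_mul, mul_sum]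
  simp only [Nat.cast_zero, zero_mul, zero_add, ← mul_assoc, succ_mul_expCoeff_succ]

lemma bracket_eq_sum_antidiagonal (c d : ℕ → ℂ) (j : ℕ) :
    bracket c d j = ∑ ij ∈ antidiagonal (j + 1), c ij.1 * d ij.2 * ((ij.1 : ℂ) - ij.2) :=
  (Nat.sum_antidiagonal_eq_sum_range_succ (fun p q => c p * d q * ((p : ℂ) - q)) (j + 1)).symm

lemma bracket_neg_neg (c d : ℕ → ℂ) : bracket (-c) (-d) = bracket c d := by
  funext j
  simp only [bracket, Pi.neg_apply, neg_mul_neg]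

lemma bracket_expCoeff (x y : ℂ) :
    bracket (expCoeff x) (expCoeff y) = fun j => (x - y) * expCoeff (x + y) j := by
  funext j
  have hsnd := sum_antidiagonal_fst_mul_expCoeff_mul y x j
  rw [← Nat.sum_antidiagonal_swap, add_comm y x] at hsnd
  simp only [Prod.fst_swap, Prod.snd_swap, mul_comm (expCoeff y _)] at hsnd
  rw [bracket_eq_sum_antidiagonal, sub_mul, ← sum_antidiagonal_fst_mul_expCoeff_mul x y j,
    ← hsnd, ← sum_sub_distrib]
  exact sum_congr rfl fun ij _ => by ring

/-- `[α̃_m, α̃_n] = (m-n)·α̃_{m+n}` for all `m, n ≥ 0`. -/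
theorem stmt0 (m n : ℕ) :
    bracket (atilde m) (atilde n) = fun j => ((m : ℂ) - (n : ℂ)) * atilde (m+n) j := by
  have hatilde : ∀ k : ℕ, atilde k = -expCoeff (-k) := fun _ => rfl
  rw [hatilde, hatilde, bracket_neg_neg, bracket_expCoeff]
  funext j
  rw [hatilde, Pi.neg_apply, Nat.cast_add, neg_add]
  ring
end

section
/- For all integers m, n ≥ 0 and all integers k ≥ -1, the identity ∑_{k₁ ≥ 0, k₂ ≥ -1, k₁+k₂ = k} (-m)^{k₁+1}·(-n)^{k₂+1} / (k₁! · (k₂+1)!) − ∑_{k₁ ≥ -1, k₂ ≥ 0, k₁+k₂ = k} (-m)^{k₁+1}·(-n)^{k₂+1} / ((k₁+1)! · k₂!) = ((-1)^k / (k+1)!) · (m − n) · (m + n)^{k+1} holds in ℚ. -/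
/-!
Both sums are binomial expansions in disguise: since `1 / (i! (K-i)!) = (K choose i) / K!`,
the first sum is `(-m) (-(m+n))^K / K!` and the second, after renaming, `(-n) (-(m+n))^K / K!`.
Their difference is `(n - m) (-1)^K (m+n)^K / K!`.
-/

open Finset

variable {R : Type*} [Semifield R] [CharZero R]

theorem sum_pow_mul_pow_div_factorial_mul_factorial (K : ℕ) (x y : R) :
    ∑ i ∈ range (K + 1), x ^ i * y ^ (K - i) / ((i.factorial : R) * ((K - i).factorial : R))
      = (x + y) ^ K / (K.factorial : R) := by
  rw [add_pow, sum_div]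
  refine sum_congr rfl fun i hi => ?_
  rw [Nat.cast_choose R (Nat.lt_succ_iff.mp (mem_range.mp hi))]
  field_simp
  exact (mul_div_mul_right _ _ (Nat.cast_ne_zero.mpr K.factorial_ne_zero)).symm

theorem sum_pow_succ_mul_pow_div_factorial_mul_factorial (K : ℕ) (x y : R) :
    ∑ i ∈ range (K + 1), x ^ (i + 1) * y ^ (K - i) / ((i.factorial : R) * ((K - i).factorial : R))
      = x * ((x + y) ^ K / (K.factorial : R)) := by
  rw [← sum_pow_mul_pow_div_factorial_mul_factorial, mul_sum]
  exact sum_congr rfl fun i _ => by ring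

-- `K = (k+1).toNat` stands for `k + 1`: in the first sum `k₁ = i`, `k₂ + 1 = K - i`,
-- in the second `k₂ = i`, `k₁ + 1 = K - i`.
theorem stmt1_general (m n : ℕ) (k : ℤ) :
    (∑ i ∈ range ((k+1).toNat + 1),
        (-(m:ℚ))^(i+1) * (-(n:ℚ))^((k+1).toNat - i) /
          ((i.factorial : ℚ) * (((k+1).toNat - i).factorial : ℚ)))
    - (∑ i ∈ range ((k+1).toNat + 1),
        (-(m:ℚ))^((k+1).toNat - i) * (-(n:ℚ))^(i+1) /
          (((((k+1).toNat - i).factorial : ℚ)) * (i.factorial : ℚ)))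
    = ((-1:ℚ)^((k+1).toNat + 1) / (((k+1).toNat).factorial : ℚ)) *
        ((m:ℚ) - (n:ℚ)) * ((m:ℚ) + (n:ℚ))^((k+1).toNat) := by
  set K := (k+1).toNat
  have hswap : ∑ i ∈ range (K + 1),
      (-(m:ℚ))^(K - i) * (-(n:ℚ))^(i+1) / (((K - i).factorial : ℚ) * (i.factorial : ℚ))
      = ∑ i ∈ range (K + 1),
      (-(n:ℚ))^(i+1) * (-(m:ℚ))^(K - i) / ((i.factorial : ℚ) * ((K - i).factorial : ℚ)) :=
    sum_congr rfl fun i _ => by ring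
  rw [hswap, sum_pow_succ_mul_pow_div_factorial_mul_factorial,
    sum_pow_succ_mul_pow_div_factorial_mul_factorial, add_comm (-(n:ℚ)), ← neg_add, neg_pow]
  ring

/-- For all integers `m, n ≥ 0` and all integers `k ≥ -1` (written via `K := (k+1).toNat`, so
that `k = K - 1`), the identity
`∑_{k₁≥0,k₂≥-1,k₁+k₂=k} (-m)^(k₁+1)(-n)^(k₂+1)/(k₁!(k₂+1)!)
 - ∑_{k₁≥-1,k₂≥0,k₁+k₂=k} (-m)^(k₁+1)(-n)^(k₂+1)/((k₁+1)!k₂!)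
 = ((-1)^k/(k+1)!)·(m-n)·(m+n)^(k+1)` holds in `ℚ`.  (In the first sum `k₁ = i`,
`k₂+1 = K-i`; in the second `k₂ = i`, `k₁+1 = K-i`; and `(-1)^k = (-1)^(K+1)`,
`(k+1)! = K!`, `(m+n)^(k+1) = (m+n)^K`.) -/
theorem stmt1 (m n : ℕ) (k : ℤ) (hk : -1 ≤ k) :
    (∑ i ∈ range ((k+1).toNat + 1),
        (-(m:ℚ))^(i+1) * (-(n:ℚ))^((k+1).toNat - i) /
          ((i.factorial : ℚ) * (((k+1).toNat - i).factorial : ℚ)))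
    - (∑ i ∈ range ((k+1).toNat + 1),
        (-(m:ℚ))^((k+1).toNat - i) * (-(n:ℚ))^(i+1) /
          (((((k+1).toNat - i).factorial : ℚ)) * (i.factorial : ℚ)))
    = ((-1:ℚ)^((k+1).toNat + 1) / (((k+1).toNat).factorial : ℚ)) *
        ((m:ℚ) - (n:ℚ)) * ((m:ℚ) + (n:ℚ))^((k+1).toNat) :=
  stmt1_general m n k
end

section
/- Let Q ∈ ℂ[x][[T₁, T₃, T₅, …]] be a formal power series in the odd variables T_{2a+1} with polynomial coefficients in x, satisfying the equation Q = −x/2 + ∑_{a ≥ 0} T_{2a+1} · Q^{2a+1}/a!. Then Q is unique, Q(x, 0) = −x/2, and Q satisfies the hierarchy of PDEs ∂Q/∂T_{2a+1} = (Q^{2a}/a!) · ∂Q/∂T₁ for every a ≥ 0. -/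
/- We work in `ℂ[x][[T₁, T₃, T₅, …]]`, modelled as `MvPowerSeries ℕ (Polynomial ℂ)`
where the variable with index `a : ℕ` is `T_{2a+1}`. -/

/-- The series `∑_{a ≥ 0} T_{2a+1}·Q^{2a+1}/a!`, defined coefficientwise (for a fixed
monomial `σ` only the finitely many `a` with `σ a ≥ 1` contribute, and the coefficient
of `σ` in `T_{2a+1}·F` is the coefficient of `σ - e_a` in `F`). -/
noncomputable def rhsSum (Q : MvPowerSeries ℕ (Polynomial ℂ)) : MvPowerSeries ℕ (Polynomial ℂ) :=
  fun σ => ∑ a ∈ σ.support,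
    Polynomial.C ((a.factorial : ℂ)⁻¹) *
      MvPowerSeries.coeff (R := Polynomial ℂ) (σ - Finsupp.single a 1) (Q ^ (2*a+1))

/-- The formal partial derivative `∂/∂T_{2i+1}`. -/
noncomputable def pd (i : ℕ) (f : MvPowerSeries ℕ (Polynomial ℂ)) :
    MvPowerSeries ℕ (Polynomial ℂ) :=
  fun σ => ((σ i + 1 : ℕ) : Polynomial ℂ) *
    MvPowerSeries.coeff (R := Polynomial ℂ) (σ + Finsupp.single i 1) f

/-! The coefficient of a monomial `n` in `∑ₐ Tₐ Φₐ(Q)` only involves coefficients of `Q` at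
monomials strictly below `n`, so a fixed point is determined by well-founded induction on `n`.
Differentiating the fixed-point equation in `T_{2i+1}` gives `(1 - G) ∂ᵢQ = Q^{2i+1}/i!` with
`G = ∑ₐ Tₐ (2a+1) Q^{2a}/a!`. As `G` has no constant term, `1 - G` is a unit, and comparing the
equations for `i = a` and `i = 0` gives `∂ₐQ = (Q^{2a}/a!) ∂₀Q`. -/

open Finsupp MvPowerSeries
open scoped Polynomial Nat

namespace MvPowerSeries

variable {σ R : Type*} [CommSemiring R]

/-- The locally finite sum `∑ₐ X a * F a`. -/
noncomputable def sumXMul (F : σ → MvPowerSeries σ R) : MvPowerSeries σ R :=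
  fun n => ∑ a ∈ n.support, coeff (n - single a 1) (F a)

theorem coeff_sumXMul (F : σ → MvPowerSeries σ R) (n : σ →₀ ℕ) :
    coeff n (sumXMul F) = ∑ a ∈ n.support, coeff (n - single a 1) (F a) := rfl

theorem coeff_X_mul_eq_ite (a : σ) (f : MvPowerSeries σ R) (n : σ →₀ ℕ) :
    coeff n (X a * f) = if n a ≠ 0 then coeff (n - single a 1) f else 0 := by
  classical
  rw [X_def, coeff_monomial_mul, one_mul]
  simp only [single_le_iff, Nat.one_le_iff_ne_zero]

theorem coeff_sumXMul_eq_coeff_sum (F : σ → MvPowerSeries σ R) {n : σ →₀ ℕ} {S : Finset σ}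
    (hS : n.support ⊆ S) : coeff n (sumXMul F) = coeff n (∑ a ∈ S, X a * F a) := by
  have hsupp : S.filter (fun a => n a ≠ 0) = n.support := by
    ext a
    simpa using fun ha => hS (mem_support_iff.mpr ha)
  rw [map_sum, coeff_sumXMul, ← hsupp, Finset.sum_filter]
  simp only [coeff_X_mul_eq_ite]

theorem constantCoeff_sumXMul (F : σ → MvPowerSeries σ R) : constantCoeff (sumXMul F) = 0 := by
  rw [← coeff_zero_eq_constantCoeff_apply, coeff_sumXMul, support_zero, Finset.sum_empty]

theorem sumXMul_mul (F : σ → MvPowerSeries σ R) (H : MvPowerSeries σ R) :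
    sumXMul (fun a => F a * H) = sumXMul F * H := by
  classical
  ext n
  have htrunc : trunc' R n (sumXMul F) = trunc' R n (∑ a ∈ n.support, X a * F a) := by
    ext m
    simp only [coeff_trunc']
    split_ifs with hm
    · exact coeff_sumXMul_eq_coeff_sum F (support_mono hm)
    · rfl
  rw [coeff_sumXMul_eq_coeff_sum _ subset_rfl, ← coeff_trunc'_mul_trunc'_eq_coeff_mul n _ _ le_rfl,
    htrunc, coeff_trunc'_mul_trunc'_eq_coeff_mul n _ _ le_rfl, Finset.sum_mul]
  simp only [mul_assoc]

theorem pderiv_sumXMul (i : σ) (F : σ → MvPowerSeries σ R) :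
    pderiv R i (sumXMul F) = F i + sumXMul (fun a => pderiv R i (F a)) := by
  classical
  ext n
  set S := (n + single i 1).support
  have hiS : i ∈ S := by simp [S]
  have hS : n.support ⊆ S := support_mono le_self_add
  have hterm (a : σ) :
      pderiv R i (X a * F a) = (if a = i then F i else 0) + X a * pderiv R i (F a) := by
    rw [Derivation.leibniz, smul_eq_mul, smul_eq_mul, pderiv_X, Pi.single_apply]
    split_ifs with h <;> simp [h, add_comm]
  rw [coeff_pderiv, coeff_sumXMul_eq_coeff_sum F subset_rfl, ← coeff_pderiv, map_sum,
    Finset.sum_congr rfl fun a _ => hterm a, Finset.sum_add_distrib, Finset.sum_ite_eq' S i,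
    if_pos hiS, map_add, map_add, coeff_sumXMul_eq_coeff_sum _ hS]

theorem pderiv_C_mul (i : σ) (r : R) (f : MvPowerSeries σ R) :
    pderiv R i (C r * f) = C r * pderiv R i f := by
  rw [← smul_eq_C_mul, ← smul_eq_C_mul, Derivation.map_smul]

theorem trunc'_pow_eq_of_trunc'_eq [DecidableEq σ] {n : σ →₀ ℕ} {f g : MvPowerSeries σ R}
    (h : trunc' R n f = trunc' R n g) (k : ℕ) : trunc' R n (f ^ k) = trunc' R n (g ^ k) := by
  rcases Nat.eq_zero_or_pos k with rfl | hk
  · rfl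
  · rw [← trunc'_trunc'_pow hk, h, trunc'_trunc'_pow hk]

theorem eq_of_eq_add_sumXMul [DecidableEq σ] {Φ : σ → MvPowerSeries σ R → MvPowerSeries σ R}
    (hΦ : ∀ a n f g, trunc' R n f = trunc' R n g → trunc' R n (Φ a f) = trunc' R n (Φ a g))
    {f₀ P Q : MvPowerSeries σ R} (hP : P = f₀ + sumXMul fun a => Φ a P)
    (hQ : Q = f₀ + sumXMul fun a => Φ a Q) : P = Q := by
  ext n
  induction n using WellFoundedLT.induction with
  | ind n ih =>
    rw [hP, hQ, map_add, map_add, coeff_sumXMul, coeff_sumXMul]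
    refine congrArg _ (Finset.sum_congr rfl fun a ha => ?_)
    set m := n - single a 1
    have hpos : 0 < single a 1 := pos_iff_ne_zero.mpr (single_ne_zero.mpr one_ne_zero)
    have hle : single a 1 ≤ n :=
      single_le_iff.mpr (Nat.one_le_iff_ne_zero.mpr (mem_support_iff.mp ha))
    have hmn : m < n := (lt_add_of_pos_right m hpos).trans_eq (tsub_add_cancel_of_le hle)
    have htrunc : trunc' R m P = trunc' R m Q := by
      ext k
      simp only [coeff_trunc']
      split_ifs with hk
      · exact ih k (hk.trans_lt hmn)
      · rfl
    simpa [coeff_trunc'] using congrArg (MvPolynomial.coeff m) (hΦ a m P Q htrunc)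

end MvPowerSeries

theorem pd_eq_pderiv (i : ℕ) (f : MvPowerSeries ℕ ℂ[X]) : pd i f = pderiv ℂ[X] i f := by
  ext n : 1
  change ((n i + 1 : ℕ) : ℂ[X]) * _ = _
  rw [coeff_pderiv, mul_comm]
  push_cast
  rfl

theorem rhsSum_eq_sumXMul (Q : MvPowerSeries ℕ ℂ[X]) :
    rhsSum Q = sumXMul fun a => C (Polynomial.C (a ! : ℂ)⁻¹) * Q ^ (2 * a + 1) := by
  ext n
  simp only [coeff_sumXMul, coeff_C_mul]
  rfl

theorem eq_of_eq_C_add_rhsSum {c : ℂ[X]} {P Q : MvPowerSeries ℕ ℂ[X]}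
    (hP : P = C c + rhsSum P) (hQ : Q = C c + rhsSum Q) : P = Q := by
  rw [rhsSum_eq_sumXMul] at hP hQ
  refine eq_of_eq_add_sumXMul (Φ := fun a f => C (Polynomial.C (a ! : ℂ)⁻¹) * f ^ (2 * a + 1))
    (fun a n f g h => ?_) hP hQ
  rw [trunc'_C_mul, trunc'_C_mul, trunc'_pow_eq_of_trunc'_eq h]

theorem pderiv_eq_of_eq_C_add_rhsSum {c : ℂ[X]} {Q : MvPowerSeries ℕ ℂ[X]}
    (hQ : Q = C c + rhsSum Q) (a : ℕ) :
    pderiv ℂ[X] a Q = C (Polynomial.C (a ! : ℂ)⁻¹) * Q ^ (2 * a) * pderiv ℂ[X] 0 Q := by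
  set G := sumXMul fun b =>
    C (Polynomial.C (b ! : ℂ)⁻¹) * ((2 * b + 1 : ℕ) : MvPowerSeries ℕ ℂ[X]) * Q ^ (2 * b)
  have hlin (i : ℕ) :
      (1 - G) * pderiv ℂ[X] i Q = C (Polynomial.C (i ! : ℂ)⁻¹) * Q ^ (2 * i + 1) := by
    have h := congrArg (pderiv ℂ[X] i) hQ
    rw [map_add, pderiv_C, zero_add, rhsSum_eq_sumXMul, pderiv_sumXMul] at h
    simp only [pderiv_C_mul, pderiv_pow, add_tsub_cancel_right, ← mul_assoc] at h
    rw [sumXMul_mul] at h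
    linear_combination h
  have hunit : IsUnit (1 - G) := by
    rw [isUnit_iff_constantCoeff, map_sub, map_one, constantCoeff_sumXMul, sub_zero]
    exact isUnit_one
  refine hunit.mul_left_cancel ?_
  rw [mul_left_comm, hlin, hlin, Nat.factorial_zero, Nat.cast_one, inv_one, map_one, map_one,
    one_mul]
  ring

/-- If `Q ∈ ℂ[x][[T₁,T₃,…]]` satisfies `Q = -x/2 + ∑_{a≥0} T_{2a+1}Q^{2a+1}/a!`, then `Q`
is unique, `Q(x, 0) = -x/2`, and `∂Q/∂T_{2a+1} = (Q^{2a}/a!)·∂Q/∂T₁` for every `a ≥ 0`. -/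
theorem stmt3 (Q : MvPowerSeries ℕ (Polynomial ℂ))
    (hQ : Q = MvPowerSeries.C (σ := ℕ) (R := Polynomial ℂ) (Polynomial.C (-(2⁻¹ : ℂ)) * Polynomial.X)
      + rhsSum Q) :
    (∀ Q' : MvPowerSeries ℕ (Polynomial ℂ),
      Q' = MvPowerSeries.C (σ := ℕ) (R := Polynomial ℂ) (Polynomial.C (-(2⁻¹ : ℂ)) * Polynomial.X)
        + rhsSum Q' → Q' = Q) ∧
    MvPowerSeries.constantCoeff (σ := ℕ) (R := Polynomial ℂ) Q
      = Polynomial.C (-(2⁻¹ : ℂ)) * Polynomial.X ∧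
    ∀ a : ℕ, pd a Q
      = MvPowerSeries.C (σ := ℕ) (R := Polynomial ℂ) (Polynomial.C ((a.factorial : ℂ)⁻¹))
          * Q ^ (2*a) * pd 0 Q := by
  refine ⟨fun Q' hQ' => eq_of_eq_C_add_rhsSum hQ' hQ, ?_, fun a => ?_⟩
  · rw [hQ, map_add, constantCoeff_C, rhsSum_eq_sumXMul, constantCoeff_sumXMul, add_zero]
  · rw [pd_eq_pderiv, pd_eq_pderiv]
    exact pderiv_eq_of_eq_C_add_rhsSum hQ a
end

section
/- Let v ∈ ℚ[[t₀, t₁, t₂, …]] be defined by v = t₀ + ∑_{k ≥ 2} (1/k) ∑_{i₁+⋯+i_k = k−1, i_j ≥ 0} (t_{i₁}/i₁!)⋯(t_{i_k}/i_k!). Then v satisfies the fixed-point (genus-zero string) equation v = ∑_{i ≥ 0} t_i · v^i / i!, and it is the unique solution of this equation in ℚ[[t₀, t₁, …]] with zero constant term. -/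
/-!
Coefficientwise, `v` is the generating series of plane trees. Encode a forest by its Łukasiewicz
word, the out-degrees of its vertices in preorder, and weight a word `(i₁, …, i_k)` by
`∏ 1/i_j!`. The coefficient of a monomial of degree `k` in `v` is `1/k` times the total weight of
the words of length `k` and letter sum `k - 1` with that letter multiset; by the cycle lemma
exactly one of the `k` rotations of such a word is a tree, so this is the total weight of the
trees. Then `v^i` is the series of forests of `i` trees, and removing the root of a tree gives
`v = ∑ t_i v^i/i!`. Uniqueness holds because the coefficient of a monomial of degree `n` on the
right-hand side involves only coefficients of degree `< n`.
-/
open Finset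

/- We work in `ℚ[[t₀, t₁, t₂, …]]`, modelled as `MvPowerSeries ℕ ℚ`. -/

/-- The series `v = t₀ + ∑_{k≥2} (1/k) ∑_{i₁+⋯+i_k=k-1, i_j≥0} (t_{i₁}/i₁!)⋯(t_{i_k}/i_k!)`,
defined coefficientwise: a monomial `σ` of total degree `k ≥ 2` receives, from each tuple
`(i₁,…,i_k)` with `∑ i_j = k-1` whose associated monomial is `σ`, the contribution
`(1/k)·∏_j 1/i_j!`; the degree-one part is `t₀`. -/
noncomputable def vSeries : MvPowerSeries ℕ ℚ := fun σ =>
  if 2 ≤ σ.sum fun _ e => e then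
    ((σ.sum fun _ e => e : ℕ) : ℚ)⁻¹ *
      ∑ t ∈ Finset.Nat.antidiagonalTuple (σ.sum fun _ e => e) ((σ.sum fun _ e => e) - 1),
        (if (∑ j, Finsupp.single (t j) 1) = σ
          then ∏ j, ((t j).factorial : ℚ)⁻¹ else 0)
  else if σ = Finsupp.single 0 1 then 1 else 0

/-- The series `∑_{i ≥ 0} t_i·w^i/i!`, defined coefficientwise (for a fixed monomial `σ`
only the finitely many `i` with `σ i ≥ 1` contribute). -/
noncomputable def stringRHS (w : MvPowerSeries ℕ ℚ) : MvPowerSeries ℕ ℚ := fun σ =>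
  ∑ i ∈ σ.support,
    ((i.factorial : ℚ)⁻¹) * MvPowerSeries.coeff (σ - Finsupp.single i 1) (w ^ i)

namespace StringEquation

/-- `w` lists the out-degrees, in preorder, of the vertices of a forest of `i` plane trees. -/
def IsForest (i : ℕ) (w : List ℕ) : Prop :=
  w.sum + i = w.length ∧ ∀ k < w.length, k < (w.take k).sum + i

instance (i : ℕ) : DecidablePred (IsForest i) := fun _ => inferInstanceAs (Decidable (_ ∧ _))

theorem isForest_nil_iff {i : ℕ} : IsForest i [] ↔ i = 0 := by
  simp [IsForest]

theorem not_isForest_zero_cons (a : ℕ) (w : List ℕ) : ¬ IsForest 0 (a :: w) :=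
  fun h => by simpa using h.2 0 (by simp)

theorem isForest_succ_cons_iff {j a : ℕ} {w : List ℕ} :
    IsForest (j + 1) (a :: w) ↔ IsForest (j + a) w := by
  simp only [IsForest, List.sum_cons, List.length_cons]
  constructor
  · rintro ⟨hsum, hpre⟩
    refine ⟨by omega, fun k hk => ?_⟩
    have := hpre (k + 1) (by omega)
    simp only [List.take_succ_cons, List.sum_cons] at this
    omega
  · rintro ⟨hsum, hpre⟩
    refine ⟨by omega, fun k hk => ?_⟩
    cases k with
    | zero => simp
    | succ k =>
      have := hpre k (by omega)
      simp only [List.take_succ_cons, List.sum_cons]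
      omega

theorem isForest_cons_iff {i a : ℕ} {w : List ℕ} :
    IsForest i (a :: w) ↔ ∃ j, i = j + 1 ∧ IsForest (j + a) w := by
  cases i with
  | zero => simpa using not_isForest_zero_cons a w
  | succ j => simp [isForest_succ_cons_iff]

theorem isForest_zero_iff {w : List ℕ} : IsForest 0 w ↔ w = [] := by
  cases w with
  | nil => simp [isForest_nil_iff]
  | cons a w => simpa using not_isForest_zero_cons a w

theorem IsForest.append {i j : ℕ} {l g : List ℕ} (hl : IsForest j l) (hg : IsForest i g) :
    IsForest (j + i) (l ++ g) := by
  induction l generalizing j with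
  | nil => rwa [isForest_nil_iff.1 hl, zero_add]
  | cons a l ih =>
    obtain ⟨j, rfl, htail⟩ := isForest_cons_iff.1 hl
    rw [List.cons_append, show j + 1 + i = j + i + 1 by omega, isForest_succ_cons_iff,
      show j + i + a = j + a + i by omega]
    exact ih htail

theorem IsForest.exists_append {i j : ℕ} {w : List ℕ} (h : IsForest (j + i) w) :
    ∃ l g, w = l ++ g ∧ IsForest j l ∧ IsForest i g := by
  induction w generalizing j with
  | nil =>
    obtain ⟨rfl, rfl⟩ : j = 0 ∧ i = 0 := by simpa [isForest_nil_iff] using h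
    exact ⟨[], [], rfl, isForest_nil_iff.2 rfl, isForest_nil_iff.2 rfl⟩
  | cons a w ih =>
    cases j with
    | zero => exact ⟨[], a :: w, rfl, isForest_nil_iff.2 rfl, by simpa using h⟩
    | succ j =>
      rw [show j + 1 + i = j + i + 1 by omega, isForest_succ_cons_iff,
        show j + i + a = j + a + i by omega] at h
      obtain ⟨l, g, rfl, hl, hg⟩ := ih h
      exact ⟨a :: l, g, rfl, isForest_succ_cons_iff.2 hl, hg⟩

theorem IsForest.eq_of_append_eq_append {j : ℕ} {l l' g g' : List ℕ} (hl : IsForest j l)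
    (hl' : IsForest j l') (h : l ++ g = l' ++ g') : l = l' := by
  induction l generalizing j l' with
  | nil =>
    rw [isForest_nil_iff.1 hl, isForest_zero_iff] at hl'
    exact hl'.symm
  | cons a l ih =>
    obtain ⟨j, rfl, htail⟩ := isForest_cons_iff.1 hl
    cases l' with
    | nil => simp [isForest_nil_iff] at hl'
    | cons b l' =>
      obtain ⟨rfl, heq⟩ := List.cons_eq_cons.1 (by simpa only [List.cons_append] using h)
      rw [ih htail (isForest_succ_cons_iff.1 hl') heq]

theorem sum_take_rotate_add_of_le {w : List ℕ} {r k : ℕ} (hr : r ≤ w.length)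
    (hk : k ≤ w.length - r) :
    ((w.rotate r).take k).sum + (w.take r).sum = (w.take (r + k)).sum := by
  rw [List.rotate_eq_drop_append_take hr, List.take_append_of_le_length (by simpa),
    List.take_add, List.sum_append, add_comm]

theorem sum_take_rotate_add_of_ge {w : List ℕ} {r k : ℕ} (hr : r ≤ w.length)
    (hk : w.length - r ≤ k) (hk' : k ≤ w.length) :
    ((w.rotate r).take k).sum + (w.take r).sum = w.sum + (w.take (k - (w.length - r))).sum := by
  rw [List.rotate_eq_drop_append_take hr, List.take_append, List.take_of_length_le (by simp; omega),
    List.length_drop, List.take_take, min_eq_left (by omega), List.sum_append,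
    ← List.sum_take_add_sum_drop w r]
  ring

def excess (w : List ℕ) (j : ℕ) : ℤ := j - (w.take j).sum

theorem isForest_one_rotate_iff {w : List ℕ} {r : ℕ} (hs : w.sum + 1 = w.length)
    (hr : r < w.length) :
    IsForest 1 (w.rotate r) ↔
      (∀ j < w.length, excess w j ≤ excess w r) ∧ ∀ j < r, excess w j < excess w r := by
  have hsum : (w.rotate r).sum = w.sum := (List.rotate_perm w r).sum_eq
  simp only [IsForest, excess, List.length_rotate, hsum]
  constructor
  · rintro ⟨-, hpre⟩
    have hlow : ∀ j < r, (j : ℤ) - (w.take j).sum < r - (w.take r).sum := by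
      intro j hj
      have := sum_take_rotate_add_of_ge (k := j + (w.length - r)) hr.le (by omega) (by omega)
      rw [Nat.add_sub_cancel] at this
      have := hpre (j + (w.length - r)) (by omega)
      omega
    refine ⟨fun j hj => ?_, hlow⟩
    rcases lt_or_ge j r with hjr | hrj
    · exact (hlow j hjr).le
    · have := sum_take_rotate_add_of_le (k := j - r) hr.le (by omega)
      rw [Nat.add_sub_cancel' hrj] at this
      have := hpre (j - r) (by omega)
      omega
  · rintro ⟨hmax, hlow⟩
    refine ⟨hs, fun k hk => ?_⟩
    by_cases hkr : r + k < w.length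
    · have := sum_take_rotate_add_of_le (k := k) hr.le (by omega)
      have := hmax (r + k) hkr
      omega
    · have := sum_take_rotate_add_of_ge (k := k) hr.le (by omega) hk.le
      have := hlow (k - (w.length - r)) (by omega)
      omega

theorem existsUnique_first_argmax {f : ℕ → ℤ} {n : ℕ} (hn : 0 < n) :
    ∃! r, r < n ∧ (∀ j < n, f j ≤ f r) ∧ ∀ j < r, f j < f r := by
  obtain ⟨m, hm, hmax⟩ := (range n).exists_max_image f ⟨0, mem_range.2 hn⟩
  have hex : ∃ r, r < n ∧ f m ≤ f r := ⟨m, mem_range.1 hm, le_rfl⟩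
  obtain ⟨hr₀, hr₀m⟩ := Nat.find_spec hex
  have hfirst : ∀ j < Nat.find hex, f j < f (Nat.find hex) := fun j hj =>
    (not_le.1 fun hle => Nat.find_min hex hj ⟨by omega, hle⟩).trans_le hr₀m
  refine ⟨Nat.find hex, ⟨hr₀, fun j hj => (hmax j (mem_range.2 hj)).trans hr₀m, hfirst⟩, ?_⟩
  rintro r ⟨hr, hrmax, hrfirst⟩
  obtain h | h | h := lt_trichotomy r (Nat.find hex)
  · exact absurd (hfirst r h) (not_lt.2 (hrmax _ hr₀))
  · exact h
  · exact absurd (hrfirst _ h) (not_lt.2 (hmax r (mem_range.2 hr) |>.trans hr₀m))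

/-- The cycle lemma of Dvoretzky and Motzkin. -/
theorem existsUnique_isForest_one_rotate {w : List ℕ} (hs : w.sum + 1 = w.length) :
    ∃! r, r < w.length ∧ IsForest 1 (w.rotate r) := by
  obtain ⟨r, ⟨hr, hmax⟩, huniq⟩ :=
    existsUnique_first_argmax (f := excess w) (n := w.length) (by omega)
  exact ⟨r, ⟨hr, (isForest_one_rotate_iff hs hr).2 hmax⟩,
    fun r' ⟨hr', ht⟩ => huniq r' ⟨hr', (isForest_one_rotate_iff hs hr').1 ht⟩⟩

theorem sum_eq_smul_sum_isForest_one {M : Type*} [AddCommMonoid M] {S : Finset (List ℕ)} {n : ℕ}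
    (hS : ∀ w ∈ S, w.length = n ∧ w.sum + 1 = n) (hrot : ∀ w ∈ S, ∀ r, w.rotate r ∈ S)
    (F : List ℕ → M) (hF : ∀ w r, F (w.rotate r) = F w) :
    ∑ w ∈ S, F w = n • ∑ w ∈ S with IsForest 1 w, F w := by
  have hrot_n : ∀ w ∈ S, ∀ a b, a + b = n → (w.rotate a).rotate b = w := fun w hw a b hab => by
    rw [List.rotate_rotate, hab, ← (hS w hw).1, List.rotate_length]
  calc ∑ w ∈ S, F w
      = ∑ w ∈ S, ∑ r ∈ range n with IsForest 1 (w.rotate r), F (w.rotate r) := by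
        refine sum_congr rfl fun w hw => ?_
        obtain ⟨hlen, hsum⟩ := hS w hw
        obtain ⟨r, ⟨hr, ht⟩, huniq⟩ := existsUnique_isForest_one_rotate (w := w) (by omega)
        have : {r ∈ range n | IsForest 1 (w.rotate r)} = {r} := by
          ext r'
          simp only [mem_filter, mem_range, mem_singleton]
          exact ⟨fun h => huniq r' (hlen ▸ h), fun h => h ▸ ⟨hlen ▸ hr, ht⟩⟩
        rw [this, sum_singleton, hF]
    _ = ∑ r ∈ range n, ∑ w ∈ S with IsForest 1 (w.rotate r), F (w.rotate r) := by
        simp only [sum_filter]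
        exact sum_comm
    _ = ∑ r ∈ range n, ∑ w ∈ S with IsForest 1 w, F w := by
        refine sum_congr rfl fun r hr => ?_
        have hr : r < n := mem_range.1 hr
        refine sum_nbij' (·.rotate r) (·.rotate (n - r)) ?_ ?_ ?_ ?_ fun _ _ => rfl
        · intro w hw
          simp only [mem_filter] at hw ⊢
          exact ⟨hrot w hw.1 r, hw.2⟩
        · intro w hw
          simp only [mem_filter] at hw ⊢
          rw [hrot_n w hw.1 _ _ (by omega)]
          exact ⟨hrot w hw.1 _, hw.2⟩
        all_goals exact fun w hw => hrot_n w (mem_filter.1 hw).1 _ _ (by omega)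
    _ = n • ∑ w ∈ S with IsForest 1 w, F w := by rw [sum_const, card_range]

noncomputable def wordMonomial (w : List ℕ) : ℕ →₀ ℕ := Multiset.toFinsupp w

noncomputable def wordWeight (w : List ℕ) : ℚ := (w.map fun i => (i.factorial : ℚ)⁻¹).prod

@[simp] theorem wordMonomial_nil : wordMonomial [] = 0 := by
  simp [wordMonomial]

@[simp] theorem wordMonomial_cons (a : ℕ) (w : List ℕ) :
    wordMonomial (a :: w) = Finsupp.single a 1 + wordMonomial w := by
  rw [wordMonomial, ← Multiset.cons_coe, ← Multiset.singleton_add, map_add,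
    Multiset.toFinsupp_singleton, wordMonomial]

theorem wordMonomial_append (l g : List ℕ) :
    wordMonomial (l ++ g) = wordMonomial l + wordMonomial g := by
  rw [wordMonomial, ← Multiset.coe_add, map_add, wordMonomial, wordMonomial]

theorem wordMonomial_rotate (w : List ℕ) (r : ℕ) : wordMonomial (w.rotate r) = wordMonomial w := by
  rw [wordMonomial, Multiset.coe_eq_coe.2 (w.rotate_perm r), wordMonomial]

theorem degree_wordMonomial (w : List ℕ) : (wordMonomial w).degree = w.length := by
  induction w with
  | nil => simp
  | cons a w ih => simp [ih, add_comm]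

theorem wordMonomial_ofFn {n : ℕ} (t : Fin n → ℕ) :
    wordMonomial (List.ofFn t) = ∑ j, Finsupp.single (t j) 1 := by
  induction n with
  | zero => simp
  | succ n ih => rw [List.ofFn_succ, wordMonomial_cons, ih, Fin.sum_univ_succ]

@[simp] theorem wordWeight_cons (a : ℕ) (w : List ℕ) :
    wordWeight (a :: w) = (a.factorial : ℚ)⁻¹ * wordWeight w := by
  simp [wordWeight]

theorem wordWeight_append (l g : List ℕ) : wordWeight (l ++ g) = wordWeight l * wordWeight g := by
  simp [wordWeight]

theorem wordWeight_rotate (w : List ℕ) (r : ℕ) : wordWeight (w.rotate r) = wordWeight w :=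
  ((w.rotate_perm r).map _).prod_eq

theorem wordWeight_ofFn {n : ℕ} (t : Fin n → ℕ) :
    wordWeight (List.ofFn t) = ∏ j, ((t j).factorial : ℚ)⁻¹ := by
  rw [wordWeight, List.map_ofFn, List.prod_ofFn]
  rfl

noncomputable def words (τ : ℕ →₀ ℕ) : Finset (List ℕ) := (Finsupp.toMultiset τ).lists.toFinset

theorem mem_words {w : List ℕ} {τ : ℕ →₀ ℕ} : w ∈ words τ ↔ wordMonomial w = τ := by
  rw [words, Multiset.mem_toFinset, Multiset.mem_lists_iff, Multiset.quot_mk_to_coe, wordMonomial]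
  constructor
  · rintro h
    rw [← h, Finsupp.toMultiset_toFinsupp]
  · rintro rfl
    rw [Multiset.toFinsupp_toMultiset]

noncomputable def forests (i : ℕ) (τ : ℕ →₀ ℕ) : Finset (List ℕ) := (words τ).filter (IsForest i)

theorem mem_forests {i : ℕ} {w : List ℕ} {τ : ℕ →₀ ℕ} :
    w ∈ forests i τ ↔ IsForest i w ∧ wordMonomial w = τ := by
  rw [forests, mem_filter, mem_words, and_comm]

noncomputable def forestSeries (i : ℕ) : MvPowerSeries ℕ ℚ := fun τ =>
  ∑ w ∈ forests i τ, wordWeight w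

theorem forestSeries_zero : forestSeries 0 = 1 := by
  ext τ
  rw [MvPowerSeries.coeff_one, MvPowerSeries.coeff_apply]
  simp only [forestSeries, forests, sum_filter, isForest_zero_iff, sum_ite_eq', mem_words,
    wordMonomial_nil, wordWeight, List.map_nil, List.prod_nil, eq_comm]

theorem forestSeries_add (j i : ℕ) : forestSeries (j + i) = forestSeries j * forestSeries i := by
  ext τ
  rw [MvPowerSeries.coeff_mul]
  simp only [MvPowerSeries.coeff_apply, forestSeries, sum_mul_sum, ← sum_product', sum_sigma']
  symm
  refine sum_bij (fun x _ => x.2.1 ++ x.2.2) ?_ ?_ ?_ fun _ _ => (wordWeight_append _ _).symm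
  · rintro ⟨⟨μ, ν⟩, l, g⟩ hx
    simp only [mem_sigma, mem_product, HasAntidiagonal.mem_antidiagonal, mem_forests] at hx ⊢
    obtain ⟨hμν, ⟨hl, rfl⟩, hg, rfl⟩ := hx
    exact ⟨hl.append hg, by rw [wordMonomial_append, hμν]⟩
  · rintro ⟨⟨μ, ν⟩, l, g⟩ hx ⟨⟨μ', ν'⟩, l', g'⟩ hx' h
    simp only [mem_sigma, mem_product, HasAntidiagonal.mem_antidiagonal, mem_forests] at hx hx' h
    obtain ⟨-, ⟨hl, rfl⟩, -, rfl⟩ := hx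
    obtain ⟨-, ⟨hl', rfl⟩, -, rfl⟩ := hx'
    obtain rfl := hl.eq_of_append_eq_append hl' h
    obtain rfl := List.append_cancel_left h
    rfl
  · intro w hw
    obtain ⟨hforest, rfl⟩ := mem_forests.1 hw
    obtain ⟨l, g, rfl, hl, hg⟩ := hforest.exists_append
    exact ⟨⟨(wordMonomial l, wordMonomial g), l, g⟩,
      by simp [mem_forests, hl, hg, wordMonomial_append], rfl⟩

theorem forestSeries_eq_pow (i : ℕ) : forestSeries i = forestSeries 1 ^ i := by
  induction i with
  | zero => exact forestSeries_zero
  | succ i ih => rw [pow_succ', ← ih, ← forestSeries_add, add_comm]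

theorem stringRHS_forestSeries_one : stringRHS (forestSeries 1) = forestSeries 1 := by
  funext σ
  simp only [stringRHS, ← forestSeries_eq_pow, MvPowerSeries.coeff_apply, forestSeries, mul_sum]
  rw [sum_sigma']
  refine sum_bij (fun x _ => x.1 :: x.2) ?_ ?_ ?_ fun _ _ => (wordWeight_cons _ _).symm
  · rintro ⟨i, w⟩ hx
    simp only [mem_sigma, mem_forests, Finsupp.mem_support_iff] at hx ⊢
    obtain ⟨hi, hw, hmon⟩ := hx
    refine ⟨isForest_succ_cons_iff.2 (by rwa [zero_add]), ?_⟩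
    rw [wordMonomial_cons, hmon,
      add_tsub_cancel_of_le (Finsupp.single_le_iff.2 (Nat.one_le_iff_ne_zero.2 hi))]
  · rintro ⟨i, w⟩ - ⟨i', w'⟩ - h
    obtain ⟨rfl, rfl⟩ := List.cons_eq_cons.1 h
    rfl
  · intro w hw
    obtain ⟨hforest, rfl⟩ := mem_forests.1 hw
    cases w with
    | nil => exact absurd hforest (by simp [isForest_nil_iff])
    | cons a w =>
      refine ⟨⟨a, w⟩, ?_, rfl⟩
      simp only [mem_sigma, mem_forests, Finsupp.mem_support_iff, wordMonomial_cons,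
        Finsupp.add_apply, Finsupp.single_eq_same]
      refine ⟨by omega, by simpa using isForest_succ_cons_iff.1 (hforest : IsForest (0 + 1) _),
        (add_tsub_cancel_left _ _).symm⟩

theorem vSeries_apply (σ : ℕ →₀ ℕ) :
    vSeries σ = (σ.degree : ℚ)⁻¹ *
      ∑ t ∈ Finset.Nat.antidiagonalTuple σ.degree (σ.degree - 1),
        (if (∑ j, Finsupp.single (t j) 1) = σ then ∏ j, ((t j).factorial : ℚ)⁻¹ else 0) := by
  change (if 2 ≤ σ.degree then _ else _) = _
  by_cases h : 2 ≤ σ.degree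
  · exact if_pos h
  · rw [if_neg h]
    obtain h0 | h1 : σ.degree = 0 ∨ σ.degree = 1 := by omega
    · obtain rfl := (Finsupp.degree_eq_zero_iff σ).1 h0
      simp [eq_comm (a := (0 : ℕ →₀ ℕ))]
    · rw [h1, Finset.Nat.antidiagonalTuple_one]
      simp [eq_comm]

theorem mem_image_ofFn_antidiagonalTuple {n m : ℕ} {w : List ℕ} :
    w ∈ (Finset.Nat.antidiagonalTuple n m).image List.ofFn ↔ w.length = n ∧ w.sum = m := by
  constructor
  · intro h
    obtain ⟨t, ht, rfl⟩ := mem_image.1 h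
    rw [Finset.Nat.mem_antidiagonalTuple] at ht
    exact ⟨List.length_ofFn, by rwa [List.sum_ofFn]⟩
  · rintro ⟨rfl, hsum⟩
    refine mem_image.2 ⟨w.get, ?_, List.ofFn_get w⟩
    rwa [Finset.Nat.mem_antidiagonalTuple, ← List.sum_ofFn, List.ofFn_get]

theorem sum_antidiagonalTuple_eq_sum_words (σ : ℕ →₀ ℕ) (m : ℕ) :
    ∑ t ∈ Finset.Nat.antidiagonalTuple σ.degree m,
        (if (∑ j, Finsupp.single (t j) 1) = σ then ∏ j, ((t j).factorial : ℚ)⁻¹ else 0)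
      = ∑ w ∈ words σ with w.sum = m, wordWeight w := by
  simp_rw [← wordMonomial_ofFn, ← wordWeight_ofFn]
  rw [← sum_image (f := fun w => if wordMonomial w = σ then wordWeight w else 0)
    fun _ _ _ _ h => List.ofFn_injective h, ← sum_filter]
  congr 1
  ext w
  simp only [mem_filter, mem_image_ofFn_antidiagonalTuple, mem_words]
  constructor
  · rintro ⟨⟨-, hsum⟩, hmon⟩
    exact ⟨hmon, hsum⟩
  · rintro ⟨hmon, hsum⟩
    exact ⟨⟨by rw [← hmon, degree_wordMonomial], hsum⟩, hmon⟩

theorem vSeries_eq_forestSeries_one : vSeries = forestSeries 1 := by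
  funext σ
  rw [vSeries_apply, sum_antidiagonalTuple_eq_sum_words]
  have hlen : ∀ w ∈ words σ, w.length = σ.degree := fun w hw => by
    rw [← mem_words.1 hw, degree_wordMonomial]
  rcases Nat.eq_zero_or_pos σ.degree with h0 | hpos
  · rw [h0, Nat.cast_zero, inv_zero, zero_mul]
    refine (sum_eq_zero fun w hw => ?_).symm
    obtain ⟨hforest, hmon⟩ := mem_forests.1 hw
    obtain rfl : w = [] := List.length_eq_zero_iff.1 (by rw [← degree_wordMonomial, hmon, h0])
    exact absurd hforest (by simp [isForest_nil_iff])
  · set S := {w ∈ words σ | w.sum = σ.degree - 1}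
    have hS : ∀ w ∈ S, w.length = σ.degree ∧ w.sum + 1 = σ.degree := fun w hw => by
      obtain ⟨hw, hsum⟩ := mem_filter.1 hw
      exact ⟨hlen w hw, by omega⟩
    have hrot : ∀ w ∈ S, ∀ r, w.rotate r ∈ S := fun w hw r => by
      obtain ⟨hw, hsum⟩ := mem_filter.1 hw
      rw [mem_filter, mem_words, wordMonomial_rotate, (w.rotate_perm r).sum_eq]
      exact ⟨mem_words.1 hw, hsum⟩
    have htrees : {w ∈ S | IsForest 1 w} = forests 1 σ := by
      refine (filter_filter _ _ _).trans (filter_congr fun w hw => ⟨And.right, fun h => ⟨?_, h⟩⟩)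
      have := h.1
      have := hlen w hw
      omega
    rw [sum_eq_smul_sum_isForest_one hS hrot wordWeight wordWeight_rotate, htrees, nsmul_eq_mul,
      inv_mul_cancel_left₀ (by positivity)]
    rfl

theorem coeff_pow_eq_of_forall_degree_lt {σ R : Type*} [Semiring R] {u w : MvPowerSeries σ R}
    {n : ℕ} (h : ∀ μ : σ →₀ ℕ, μ.degree < n → MvPowerSeries.coeff μ u = MvPowerSeries.coeff μ w)
    (i : ℕ) {μ : σ →₀ ℕ} (hμ : μ.degree < n) :
    MvPowerSeries.coeff μ (u ^ i) = MvPowerSeries.coeff μ (w ^ i) := by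
  classical
  induction i generalizing μ with
  | zero => rfl
  | succ i ih =>
    rw [pow_succ', pow_succ', MvPowerSeries.coeff_mul, MvPowerSeries.coeff_mul]
    refine sum_congr rfl fun p hp => ?_
    have hdeg : p.1.degree + p.2.degree = μ.degree := by
      rw [← map_add, HasAntidiagonal.mem_antidiagonal.1 hp]
    rw [h p.1 (by omega), ih (by omega)]

theorem stringRHS_apply_congr {u w : MvPowerSeries ℕ ℚ} {σ : ℕ →₀ ℕ}
    (h : ∀ μ : ℕ →₀ ℕ, μ.degree < σ.degree → MvPowerSeries.coeff μ u = MvPowerSeries.coeff μ w) :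
    stringRHS u σ = stringRHS w σ := by
  refine sum_congr rfl fun i hi => ?_
  have hle : Finsupp.single i 1 ≤ σ :=
    Finsupp.single_le_iff.2 (Nat.one_le_iff_ne_zero.2 (Finsupp.mem_support_iff.1 hi))
  have hdeg : σ.degree = (σ - Finsupp.single i 1).degree + 1 := by
    conv_lhs => rw [← tsub_add_cancel_of_le hle]
    rw [map_add, Finsupp.degree_single]
  rw [coeff_pow_eq_of_forall_degree_lt h i (by omega)]

theorem eq_of_eq_stringRHS {u w : MvPowerSeries ℕ ℚ} (hu : u = stringRHS u)
    (hw : w = stringRHS w) : u = w := by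
  ext σ
  induction hn : σ.degree using Nat.strong_induction_on generalizing σ with
  | _ n ih =>
    rw [hu, hw, MvPowerSeries.coeff_apply, MvPowerSeries.coeff_apply]
    exact stringRHS_apply_congr fun μ hμ => ih _ (hn ▸ hμ) μ rfl

end StringEquation

open StringEquation

/-- `v` satisfies the genus-zero string fixed-point equation `v = ∑_{i≥0} t_i v^i/i!`,
and it is the unique solution of this equation with zero constant term. -/
theorem stmt6 :
    vSeries = stringRHS vSeries ∧
    ∀ w : MvPowerSeries ℕ ℚ, MvPowerSeries.constantCoeff w = 0 →
      w = stringRHS w → w = vSeries := by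
  have hv : vSeries = stringRHS vSeries := by
    rw [vSeries_eq_forestSeries_one, stringRHS_forestSeries_one]
  exact ⟨hv, fun w _ hw => eq_of_eq_stringRHS hw hv⟩
end

section
/- With Φ(z) = exp(∑_{k ≥ 1} ((2^{−2k} − 1)B_{2k}/(k(2k−1))) z^{1−2k}) as above, the identity Φ(z+2)/Φ(z) = ((z + 3/2)(z + 1/2)) / ((z+1)·√(z(z+2))) holds in ℚ[[z^{−1}]], i.e., φ(z+2) − φ(z) = log(1 + (3/2)z^{−1}) + log(1 + (1/2)z^{−1}) − log(1 + z^{−1}) − (1/2)log(1 + 2z^{−1}). -/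
open Finset PowerSeries

/- We work in `ℚ[[w]]` with `w = z⁻¹`. -/

/-- The coefficients `c_k = (2^{-2k} - 1)·B_{2k}/(k(2k-1))` of `φ(z) = ∑_{k≥1} c_k z^{1-2k}`. -/
noncomputable def cST (k : ℕ) : ℚ :=
  (((2 : ℚ) ^ (2*k))⁻¹ - 1) * bernoulli (2*k) / ((k : ℚ) * (2*(k : ℚ) - 1))

/-- `φ(z) = ∑_{k≥1} c_k w^{2k-1}` as an element of `ℚ[[w]]`, `w = z⁻¹`. -/
noncomputable def phiS : PowerSeries ℚ :=
  PowerSeries.mk fun n => if n % 2 = 1 then cST ((n+1)/2) else 0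

/-- `φ(z+a) = ∑_{k≥1} c_k w^{2k-1}(1+aw)^{-(2k-1)}`, the substitution `z ↦ z + a`
re-expanded in powers of `w = z⁻¹`; the `n`-th coefficient only receives contributions
from `k` with `2k-1 ≤ n`, so the sum below is exact. -/
noncomputable def phiShift (a : ℚ) : PowerSeries ℚ :=
  PowerSeries.mk fun n => ∑ k ∈ Icc 1 n,
    cST k * PowerSeries.coeff (R := ℚ) n
      (PowerSeries.X ^ (2*k-1) * ((1 + PowerSeries.C (R := ℚ) a * PowerSeries.X) ^ (2*k-1))⁻¹)

/-- The series `log(1 + a·z⁻¹) = ∑_{n≥1} (-1)^{n-1} a^n w^n / n ∈ ℚ[[w]]`. -/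
noncomputable def logS (a : ℚ) : PowerSeries ℚ :=
  PowerSeries.mk fun n => if n = 0 then 0 else (-1)^(n+1) * a^n / (n : ℚ)

/-!
Compare coefficients of `w^{n+1}`. Expanding `w^{2k-1}(1 + a w)^{-(2k-1)}` binomially and using
`C(n, 2k-2) / (k(2k-1)) = 2 C(n+2, 2k) / ((n+1)(n+2))`, the coefficient of `φ(z+a)` becomes
`2/((n+1)(n+2)) · (2^{-(n+2)} E(-2a) - E(-a))`, where `E(x) = ∑_k B_{2k} C(n+2, 2k) x^{n+2-2k}`
is the even-index part of the Bernoulli polynomial `B_{n+2}(x)`; `φ(z)` itself is the case `a = 0`.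
Since `E(-x) = ±E(x)` and, by Faulhaber's formula, `E(x) - E(0)` is an explicit power sum
`(n+2) ∑_{j<x} j^{n+1}` corrected by two monomials, evaluating at `x = 4` and `x = 2` produces
exactly the coefficients of the four logarithms.
-/

namespace PowerSeries

variable {K : Type*} [Field K]

theorem inv_one_add_C_mul_X_pow_succ (a : K) (m : ℕ) :
    ((1 + C a * X) ^ (m + 1))⁻¹ = mk fun j => ((m + j).choose m : K) * (-a) ^ j := by
  have h_one_add : (1 + C a * X : K⟦X⟧) = rescale (-a) (1 - X) := by
    simp [rescale_X, sub_eq_add_neg]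
  have h_mk : (mk fun j => ((m + j).choose m : K) * (-a) ^ j)
      = rescale (-a) (mk fun j => ((m + j).choose m : K)) := by
    ext j; simp [coeff_rescale, mul_comm]
  symm
  rw [eq_inv_iff_mul_eq_one (by simp), h_one_add, h_mk, ← map_pow, ← map_mul,
    mk_add_choose_mul_one_sub_pow_eq_one, map_one]

theorem coeff_succ_X_pow_succ_mul_inv_one_add_C_mul_X_pow_succ (a : K) (m n : ℕ) :
    coeff (n + 1) (X ^ (m + 1) * ((1 + C a * X) ^ (m + 1))⁻¹)
      = (n.choose m : K) * (-a) ^ (n - m) := by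
  rw [inv_one_add_C_mul_X_pow_succ, coeff_X_pow_mul', coeff_mk]
  split_ifs with h
  · rw [show m + (n + 1 - (m + 1)) = n by omega, show n + 1 - (m + 1) = n - m by omega]
  · rw [Nat.choose_eq_zero_of_lt (by omega), Nat.cast_zero, zero_mul]

end PowerSeries

theorem Finset.sum_range_two_mul {M : Type*} [AddCommMonoid M] (f : ℕ → M) (n : ℕ) :
    ∑ i ∈ range (2 * n), f i = ∑ k ∈ range n, (f (2 * k) + f (2 * k + 1)) := by
  induction n with
  | zero => simp
  | succ n ih => rw [mul_add, mul_one, sum_range_succ, sum_range_succ, ih,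
      sum_range_succ, add_assoc]

noncomputable def evenBernoulliSum (N : ℕ) (x : ℚ) : ℚ :=
  ∑ k ∈ Icc 1 N, bernoulli (2 * k) * (N + 1).choose (2 * k) * x ^ (N + 1 - 2 * k)

theorem evenBernoulliSum_neg (N : ℕ) (x : ℚ) :
    evenBernoulliSum N (-x) = (-1) ^ (N + 1) * evenBernoulliSum N x := by
  rw [evenBernoulliSum, evenBernoulliSum, mul_sum]
  refine sum_congr rfl fun k _ => ?_
  rcases le_or_gt (2 * k) (N + 1) with hk | hk
  · have h_sign : (-1 : ℚ) ^ (N + 1) = (-1) ^ (N + 1 - 2 * k) := by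
      conv_lhs => rw [← Nat.sub_add_cancel hk, pow_add, (even_two_mul k).neg_one_pow, mul_one]
    rw [neg_pow x, h_sign]
    ring
  · simp [Nat.choose_eq_zero_of_lt hk]

theorem evenBernoulliSum_eq_eval (N : ℕ) (x : ℚ) :
    evenBernoulliSum N x
      = (Polynomial.bernoulli (N + 1)).eval x - x ^ (N + 1) + (N + 1) / 2 * x ^ N := by
  set g : ℕ → ℚ := fun i => bernoulli i * (N + 1).choose i * x ^ (N + 1 - i)
  have h_eval : (Polynomial.bernoulli (N + 1)).eval x = ∑ i ∈ range (2 * (N + 1)), g i := by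
    rw [Polynomial.bernoulli, Polynomial.eval_finsetSum]
    simp only [Polynomial.eval_monomial]
    refine sum_subset (range_subset_range.2 (by omega)) fun i _ hi => ?_
    rw [mem_range, not_lt] at hi
    simp [Nat.choose_eq_zero_of_lt (show N + 1 < i by omega)]
  have h_odd : ∑ k ∈ range (N + 1), g (2 * k + 1) = g 1 := by
    refine sum_eq_single_of_mem 0 (by simp) fun k _ hk => ?_
    simp [g, bernoulli_eq_zero_of_odd (odd_two_mul_add_one k) (by omega)]
  have h_even : ∑ k ∈ range (N + 1), g (2 * k) = g 0 + evenBernoulliSum N x := by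
    have h_shift := sum_Ico_add' (fun k => g (2 * k)) 0 N 1
    rw [zero_add, Ico_add_one_right_eq_Icc, ← range_eq_Ico] at h_shift
    rw [sum_range_succ', add_comm, h_shift]
    rfl
  have h_g₀ : g 0 = x ^ (N + 1) := by simp [g]
  have h_g₁ : g 1 = -1 / 2 * (N + 1) * x ^ N := by simp [g]
  rw [h_eval, sum_range_two_mul, sum_add_distrib, h_odd, h_even, h_g₀, h_g₁]
  ring

theorem evenBernoulliSum_natCast_sub_zero (N n : ℕ) :
    evenBernoulliSum (N + 1) n - evenBernoulliSum (N + 1) 0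
      = (N + 2) * ∑ k ∈ range n, (k : ℚ) ^ (N + 1) - n ^ (N + 2) + (N + 2) / 2 * n ^ (N + 1) := by
  rw [evenBernoulliSum_eq_eval, evenBernoulliSum_eq_eval, Polynomial.bernoulli_succ_eval,
    Polynomial.bernoulli_eval_zero, zero_pow (by omega), zero_pow (by omega)]
  push_cast
  ring

theorem phiShift_zero : phiShift 0 = phiS := by
  ext n
  simp only [phiShift, phiS, coeff_mk, map_zero, zero_mul, add_zero, one_pow, inv_one, mul_one,
    coeff_X_pow]
  split_ifs with h_odd
  · rw [sum_eq_single_of_mem ((n + 1) / 2) (mem_Icc.2 (by omega)), if_pos (by omega), mul_one]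
    intro k _ hk
    rw [if_neg (by omega), mul_zero]
  · refine sum_eq_zero fun k hk => ?_
    rw [mem_Icc] at hk
    rw [if_neg (by omega), mul_zero]

theorem cST_succ_mul_choose (j N : ℕ) :
    cST (j + 1) * N.choose (2 * j) = 2 * (((2 : ℚ) ^ (2 * (j + 1)))⁻¹ - 1)
      * bernoulli (2 * (j + 1)) * (N + 2).choose (2 * (j + 1)) / ((N + 1) * (N + 2)) := by
  have h₁ : (N + 1) * N.choose (2 * j) = (N + 1).choose (2 * j + 1) * (2 * j + 1) :=
    Nat.add_one_mul_choose_eq N (2 * j)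
  have h₂ : (N + 2) * (N + 1).choose (2 * j + 1) = (N + 2).choose (2 * (j + 1)) * (2 * (j + 1)) :=
    Nat.add_one_mul_choose_eq (N + 1) (2 * j + 1)
  rw [← Nat.cast_inj (R := ℚ)] at h₁ h₂
  push_cast at h₁ h₂
  unfold cST
  push_cast
  rw [show 2 * ((j : ℚ) + 1) - 1 = 2 * j + 1 by ring]
  field_simp
  linear_combination
    (1 - 2 ^ (2 * (j + 1))) * bernoulli (2 * (j + 1)) * ((N + 2) * h₁ + (2 * j + 1) * h₂)

theorem coeff_succ_phiShift (a : ℚ) (N : ℕ) :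
    coeff (N + 1) (phiShift a) = 2 / ((N + 1) * (N + 2)) * (((2 : ℚ) ^ (N + 2))⁻¹
      * evenBernoulliSum (N + 1) (-2 * a) - evenBernoulliSum (N + 1) (-a)) := by
  rw [phiShift, coeff_mk, evenBernoulliSum, evenBernoulliSum, mul_sum, ← sum_sub_distrib, mul_sum]
  refine sum_congr rfl fun k hk => ?_
  obtain ⟨j, rfl⟩ : ∃ j, k = j + 1 := ⟨k - 1, by rw [mem_Icc] at hk; omega⟩
  rw [show 2 * (j + 1) - 1 = 2 * j + 1 by omega,
    coeff_succ_X_pow_succ_mul_inv_one_add_C_mul_X_pow_succ, ← mul_assoc, cST_succ_mul_choose]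
  rcases le_or_gt (2 * j) N with hj | hj
  · have h_pow : (2 : ℚ) ^ (N + 2) = 2 ^ (N - 2 * j) * 2 ^ (2 * (j + 1)) := by
      rw [← pow_add]; congr 1; omega
    rw [show N + 1 + 1 - 2 * (j + 1) = N - 2 * j by omega, show -2 * a = 2 * -a by ring,
      mul_pow, h_pow]
    field_simp
  · simp [Nat.choose_eq_zero_of_lt (show N + 2 < 2 * (j + 1) by omega)]

theorem coeff_succ_phiShift_sub_phiS (a : ℚ) (N : ℕ) :
    coeff (N + 1) (phiShift a - phiS) = 2 * (-1) ^ N / ((N + 1) * (N + 2))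
      * (((2 : ℚ) ^ (N + 2))⁻¹ * (evenBernoulliSum (N + 1) (2 * a) - evenBernoulliSum (N + 1) 0)
        - (evenBernoulliSum (N + 1) a - evenBernoulliSum (N + 1) 0)) := by
  -- `E(0) = B_{N+2}` vanishes for odd `N`, so it may take the sign `(-1)^N` of the other terms.
  have h₀ : evenBernoulliSum (N + 1) 0 = (-1) ^ (N + 2) * evenBernoulliSum (N + 1) 0 := by
    simpa using evenBernoulliSum_neg (N + 1) 0
  rw [← phiShift_zero, map_sub, coeff_succ_phiShift, coeff_succ_phiShift, neg_mul,
    evenBernoulliSum_neg, evenBernoulliSum_neg, mul_zero, neg_zero]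
  conv_lhs => rw [h₀]
  ring

/-- The two-step identity
`φ(z+2) - φ(z) = log(1 + (3/2)z⁻¹) + log(1 + (1/2)z⁻¹) - log(1 + z⁻¹) - (1/2)log(1 + 2z⁻¹)`
in `ℚ[[z⁻¹]]`, i.e. `Φ(z+2)/Φ(z) = (z+3/2)(z+1/2)/((z+1)√(z(z+2)))` for `Φ = exp φ`. -/
theorem stmt9 :
    phiShift 2 - phiS
      = logS (3/2) + logS (1/2) - logS 1 - (2 : ℚ)⁻¹ • logS 2 := by
  ext n
  rcases n with _ | N
  · simp [phiShift, phiS, logS]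
  have h₄ := evenBernoulliSum_natCast_sub_zero N 4
  have h₂ := evenBernoulliSum_natCast_sub_zero N 2
  push_cast at h₄ h₂
  have s₄ : ∑ k ∈ range 4, (k : ℚ) ^ (N + 1) = 1 + 2 ^ (N + 1) + 3 ^ (N + 1) := by
    simp [sum_range_succ]
  have s₂ : ∑ k ∈ range 2, (k : ℚ) ^ (N + 1) = 1 := by simp [sum_range_succ]
  rw [coeff_succ_phiShift_sub_phiS, show (2 * 2 : ℚ) = 4 by norm_num, h₄, h₂, s₄, s₂]
  simp only [logS, map_sub, map_add, map_smul, coeff_mk, smul_eq_mul, if_neg N.succ_ne_zero,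
    Nat.cast_succ]
  rw [div_pow, div_pow, show (4 : ℚ) = 2 * 2 by norm_num, mul_pow, mul_pow]
  field_simp
  ring
end

section
/- Let F₀(x, T) := (1/2)·∑_{a,b ≥ 0} T̃_{2a+1}T̃_{2b+1}·Q^{2a+2b+2}/(a!·b!·(a+b+1)) − x·∑_{b ≥ 0} T̃_{2b+1}·Q^{2b+1}/(b!·(2b+1)) + (x²/4)·log Q, where T̃_{2a+1} = T_{2a+1} − δ_{a,0}, Q ∈ ℂ[[x+2]][[T]] satisfies Q = −x/2 + ∑_{a≥0} T_{2a+1}Q^{2a+1}/a! with Q(x,0) = −x/2, and log Q is expanded as log(−x/2) + log(Q/(−x/2)) with the second term a genuine power series with zero constant term. Then ∂²F₀/(∂T_{2a+1}∂T_{2b+1}) = Q^{2a+2b+2}/(a!·b!·(a+b+1)) for all a, b ≥ 0, and ∂²F₀/(∂x∂T_{2b+1}) = −Q^{2b+1}/(b!·(2b+1)) for all b ≥ 0, and ∂²F₀/∂x² = (1/2)·log Q. -/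
open Finset

/- We work in `ℂ[[x+2]][[T₁, T₃, T₅, …]]`, modelled as `MvPowerSeries ℕ A` with
`A := ℂ[[s]] = PowerSeries ℂ`, `s = x + 2` (so `x = s - 2`), the variable of index
`a : ℕ` being `T_{2a+1}`.  The element `log Q` is taken as an abstract element `LQ`
characterized (up to the additive constant `log(-x/2)`, which is immaterial for all
three conclusions) by `Q·∂LQ = ∂Q` for each of the derivations `∂/∂T_{2a+1}`, `∂/∂x`. -/

/-- `x = s - 2` in `A = ℂ[[s]]`. -/
noncomputable def xA : PowerSeries ℂ := PowerSeries.X - 2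

/-- The formal partial derivative `∂/∂T_{2i+1}`. -/
noncomputable def pdA (i : ℕ) (f : MvPowerSeries ℕ (PowerSeries ℂ)) :
    MvPowerSeries ℕ (PowerSeries ℂ) :=
  fun σ => ((σ i + 1 : ℕ) : PowerSeries ℂ) *
    MvPowerSeries.coeff (σ + Finsupp.single i 1) f

/-- The formal partial derivative `∂/∂x = ∂/∂s`, acting on coefficients. -/
noncomputable def dXA (f : MvPowerSeries ℕ (PowerSeries ℂ)) :
    MvPowerSeries ℕ (PowerSeries ℂ) :=
  fun σ => PowerSeries.derivative ℂ (MvPowerSeries.coeff σ f)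

/-- The series `∑_{a ≥ 0} T_{2a+1}·Q^{2a+1}/a!`, defined coefficientwise. -/
noncomputable def rhsA (Q : MvPowerSeries ℕ (PowerSeries ℂ)) :
    MvPowerSeries ℕ (PowerSeries ℂ) :=
  fun σ => ∑ a ∈ σ.support,
    PowerSeries.C ((a.factorial : ℂ)⁻¹) *
      MvPowerSeries.coeff (σ - Finsupp.single a 1) (Q ^ (2*a+1))

/-- `T̃_{2a+1} = T_{2a+1} - δ_{a,0}`. -/
noncomputable def Tt (a : ℕ) : MvPowerSeries ℕ (PowerSeries ℂ) :=
  MvPowerSeries.X a - (if a = 0 then 1 else 0)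

/-- `F₀ = (1/2)∑_{a,b≥0} T̃_{2a+1}T̃_{2b+1}Q^{2a+2b+2}/(a!b!(a+b+1))
  - x∑_{b≥0} T̃_{2b+1}Q^{2b+1}/(b!(2b+1)) + (x²/4)·log Q`, defined coefficientwise
(for a fixed monomial `σ` the terms with `a ∉ {0} ∪ supp σ` or `b ∉ {0} ∪ supp σ`
vanish, since then `T̃_{2a+1} = T_{2a+1}` contributes a variable absent from `σ`). -/
noncomputable def F0 (Q LQ : MvPowerSeries ℕ (PowerSeries ℂ)) :
    MvPowerSeries ℕ (PowerSeries ℂ) :=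
  fun σ =>
    PowerSeries.C (2⁻¹ : ℂ) *
      (∑ a ∈ insert 0 σ.support, ∑ b ∈ insert 0 σ.support,
        PowerSeries.C (((a.factorial : ℂ) * (b.factorial : ℂ) * ((a : ℂ)+(b : ℂ)+1))⁻¹) *
          MvPowerSeries.coeff σ (Tt a * Tt b * Q ^ (2*a+2*b+2)))
    - xA * (∑ b ∈ insert 0 σ.support,
        PowerSeries.C (((b.factorial : ℂ) * (2*(b : ℂ)+1))⁻¹) *
          MvPowerSeries.coeff σ (Tt b * Q ^ (2*b+1)))
    + xA ^ 2 * PowerSeries.C (4⁻¹ : ℂ) * MvPowerSeries.coeff σ LQ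

/-!
Put `W = ∑_a T̃_{2a+1} Q^{2a}/a!`. Since `T̃_{2a+1} = T_{2a+1} - δ_{a,0}`, the fixed-point
equation for `Q` says exactly that `2QW = x`. For a derivation `D` (`∂/∂T_{2b+1}` or `∂/∂x`),
`D (Q^{2a+2b+2}/(a!b!(a+b+1))) = 2Q·(Q^{2a}/a!)·(Q^{2b}/b!)·DQ` and
`D (Q^{2b+1}/(b!(2b+1))) = (Q^{2b}/b!)·DQ`, so the terms of `D F₀` in which `D` hits `Q` add up
to `QW²·DQ - xW·DQ + (x²/4)·D log Q`, which vanishes because `2QW = x` and `Q·D log Q = DQ`.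
Hence `D F₀` is obtained by differentiating only the explicit `T̃` and `x`, and the same
cancellation gives the second derivatives.

The sums over `a` are taken coefficientwise: the coefficient of a fixed monomial in
`T̃_{2a+1}·g` vanishes unless `a = 0` or `T_{2a+1}` divides that monomial.
-/

theorem Derivation.map_algebraMap_mul {R A : Type*} [CommSemiring R] [CommSemiring A] [Algebra R A]
    (D : Derivation R A A) (r : R) (a : A) : D (algebraMap R A r * a) = algebraMap R A r * D a := by
  rw [← Algebra.smul_def, D.map_smul, Algebra.smul_def]

namespace MvPowerSeries

variable {σ R ι : Type*}

theorem coeff_X_mul [Semiring R] [DecidableEq σ] (i : σ) (f : MvPowerSeries σ R)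
    (n : σ →₀ ℕ) :
    coeff n (X i * f) = if Finsupp.single i 1 ≤ n then coeff (n - Finsupp.single i 1) f else 0 := by
  rw [X, coeff_monomial_mul, one_mul]

theorem coeff_X_mul_eq_zero [Semiring R] {i : σ} {n : σ →₀ ℕ} (h : n i = 0)
    (f : MvPowerSeries σ R) : coeff n (X i * f) = 0 := by
  classical
  rw [coeff_X_mul, if_neg (by rw [Finsupp.single_le_iff, h]; omega)]

section LocSum

variable [Semiring R]

def LocFinite (f : ι → MvPowerSeries σ R) : Prop :=
  ∀ n, Function.HasFiniteSupport fun i => coeff n (f i)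

noncomputable def locSum (f : ι → MvPowerSeries σ R) : MvPowerSeries σ R :=
  fun n => ∑ᶠ i, coeff n (f i)

theorem coeff_locSum (f : ι → MvPowerSeries σ R) (n : σ →₀ ℕ) :
    coeff n (locSum f) = ∑ᶠ i, coeff n (f i) := rfl

theorem coeff_locSum_eq_sum {f : ι → MvPowerSeries σ R} {n : σ →₀ ℕ} {s : Finset ι}
    (hs : ∀ i, coeff n (f i) ≠ 0 → i ∈ s) : coeff n (locSum f) = ∑ i ∈ s, coeff n (f i) :=
  finsum_eq_sum_of_support_subset _ fun i hi => hs i hi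

theorem locSum_add {f g : ι → MvPowerSeries σ R} (hf : LocFinite f) (hg : LocFinite g) :
    locSum (fun i => f i + g i) = locSum f + locSum g := by
  ext n
  simp only [coeff_locSum, map_add]
  exact finsum_add_distrib (hf n) (hg n)

theorem locFinite_pi_single [DecidableEq ι] (j : ι) (g : MvPowerSeries σ R) :
    LocFinite (Pi.single j g) := fun n =>
  (Set.finite_singleton j).subset fun i hi => by
    by_contra h
    exact hi (by simp [show i ≠ j from h])

theorem locSum_pi_single [DecidableEq ι] (j : ι) (g : MvPowerSeries σ R) :
    locSum (Pi.single j g) = g := by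
  ext n
  rw [coeff_locSum, finsum_eq_single _ j fun i hi => by simp [hi]]
  simp

theorem mul_locSum (g : MvPowerSeries σ R) {f : ι → MvPowerSeries σ R} (hf : LocFinite f) :
    g * locSum f = locSum fun i => g * f i := by
  classical
  ext n
  simp only [coeff_mul, coeff_locSum]
  rw [← sum_finsum_comm _ _ fun p _ => (hf p.2).subset (Function.support_mul_subset_right _ _)]
  exact Finset.sum_congr rfl fun p _ => mul_finsum' _ _ (hf p.2)

end LocSum

section Derivations

variable {A : Type*} [CommSemiring R] [CommSemiring A] [Algebra R A]

theorem pderiv_locSum (i : σ) {f : ι → MvPowerSeries σ R} (hf : LocFinite f) :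
    pderiv R i (locSum f) = locSum fun k => pderiv R i (f k) := by
  ext n
  simp only [coeff_pderiv, coeff_locSum]
  exact finsum_mul' _ _ (hf _)

noncomputable def coeffDerivation (d : Derivation R A A) :
    Derivation R (MvPowerSeries σ A) (MvPowerSeries σ A) where
  toFun f n := d (coeff n f)
  map_add' f g := by ext n; exact d.map_add _ _
  map_smul' r f := by ext n; exact d.map_smul r _
  map_one_eq_zero' := by
    classical
    ext n
    change d (coeff n 1) = 0
    rw [coeff_one]
    split_ifs <;> simp
  leibniz' f g := by
    classical
    ext n
    let D : MvPowerSeries σ A → MvPowerSeries σ A := fun h m => d (coeff m h)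
    have hD : ∀ h m, coeff m (D h) = d (coeff m h) := fun _ _ => rfl
    change coeff n (D (f * g)) = coeff n (f * D g + g * D f)
    rw [mul_comm g, hD, map_add, coeff_mul, coeff_mul, coeff_mul, map_sum,
      ← Finset.sum_add_distrib]
    refine Finset.sum_congr rfl fun p _ => ?_
    rw [hD, hD, d.leibniz, smul_eq_mul, smul_eq_mul, mul_comm (coeff p.2 g)]

theorem coeff_coeffDerivation (d : Derivation R A A) (f : MvPowerSeries σ A) (n : σ →₀ ℕ) :
    coeff n (coeffDerivation d f) = d (coeff n f) := rfl

theorem coeffDerivation_C (d : Derivation R A A) (a : A) :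
    coeffDerivation d (C a : MvPowerSeries σ A) = C (d a) := by
  classical
  ext n
  rw [coeff_coeffDerivation, coeff_C, coeff_C]
  split_ifs <;> simp

theorem coeffDerivation_X (d : Derivation R A A) (i : σ) :
    coeffDerivation d (X i : MvPowerSeries σ A) = 0 := by
  classical
  ext n
  rw [coeff_coeffDerivation, coeff_X]
  split_ifs <;> simp

theorem coeffDerivation_locSum (d : Derivation R A A) {f : ι → MvPowerSeries σ A}
    (hf : LocFinite f) :
    coeffDerivation d (locSum f) = locSum fun k => coeffDerivation d (f k) := by
  ext n
  simp only [coeff_coeffDerivation, coeff_locSum]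
  exact d.toLinearMap.toAddMonoidHom.map_finsum (hf n)

end Derivations

end MvPowerSeries

namespace BGW

open MvPowerSeries

abbrev Ser : Type := MvPowerSeries ℕ (PowerSeries ℂ)

local notation "κ" => algebraMap ℂ Ser

noncomputable def dT (i : ℕ) : Derivation ℂ Ser Ser :=
  (pderiv (PowerSeries ℂ) i).restrictScalars ℂ

noncomputable def dx : Derivation ℂ Ser Ser := coeffDerivation (PowerSeries.derivative ℂ)

noncomputable def x : Ser := C xA

theorem pdA_eq_dT (i : ℕ) (f : Ser) : pdA i f = dT i f := by
  ext n : 1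
  rw [dT, Derivation.restrictScalars_apply, coeff_pderiv, mul_comm]
  change ((n i + 1 : ℕ) : PowerSeries ℂ) * _ = _
  push_cast
  rfl

theorem dXA_eq_dx (f : Ser) : dXA f = dx f := rfl

theorem C_C_eq_algebraMap (r : ℂ) : (C (PowerSeries.C r) : Ser) = κ r := by
  simp [MvPowerSeries.algebraMap_apply]

theorem dT_x (i : ℕ) : dT i x = 0 := pderiv_C

theorem dx_x : dx x = 1 := by
  rw [dx, x, coeffDerivation_C, xA, map_sub, PowerSeries.derivative_X,
    ← map_ofNat (PowerSeries.C (R := ℂ)) 2, PowerSeries.derivative_C, sub_zero, map_one]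

theorem dT_Tt (i a : ℕ) : dT i (Tt a) = (Pi.single i 1 : ℕ → Ser) a := by
  classical
  rw [Tt, Derivation.map_sub, dT, Derivation.restrictScalars_apply, pderiv_X]
  split_ifs <;> simp

theorem dx_Tt (a : ℕ) : dx (Tt a) = 0 := by
  rw [Tt, Derivation.map_sub, dx, coeffDerivation_X]
  split_ifs <;> simp

theorem Tt_of_ne_zero {a : ℕ} (ha : a ≠ 0) : Tt a = X a := by
  rw [Tt, if_neg ha, sub_zero]

theorem mem_of_coeff_Tt_mul_ne_zero {a : ℕ} {g : Ser} {n : ℕ →₀ ℕ}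
    (h : coeff n (Tt a * g) ≠ 0) : a ∈ insert 0 n.support := by
  classical
  rcases eq_or_ne a 0 with rfl | ha
  · exact Finset.mem_insert_self 0 _
  refine Finset.mem_insert_of_mem (Finsupp.mem_support_iff.mpr fun hn => h ?_)
  rw [Tt_of_ne_zero ha, coeff_X_mul_eq_zero hn]

noncomputable def sumTt (g : ℕ → Ser) : Ser := locSum fun a => Tt a * g a

theorem locFinite_Tt_mul (g : ℕ → Ser) : LocFinite fun a => Tt a * g a := fun n =>
  (insert 0 n.support).finite_toSet.subset fun _ ha => mem_of_coeff_Tt_mul_ne_zero ha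

theorem coeff_sumTt (g : ℕ → Ser) (n : ℕ →₀ ℕ) :
    coeff n (sumTt g) = ∑ a ∈ insert 0 n.support, coeff n (Tt a * g a) :=
  coeff_locSum_eq_sum fun _ h => mem_of_coeff_Tt_mul_ne_zero h

theorem sumTt_add (g h : ℕ → Ser) : sumTt (fun a => g a + h a) = sumTt g + sumTt h := by
  simp only [sumTt, mul_add]
  exact locSum_add (locFinite_Tt_mul g) (locFinite_Tt_mul h)

theorem mul_sumTt (c : Ser) (g : ℕ → Ser) : c * sumTt g = sumTt fun a => c * g a := by
  simp only [sumTt, mul_locSum c (locFinite_Tt_mul g), mul_left_comm c]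

theorem sumTt_mul (g : ℕ → Ser) (c : Ser) : sumTt g * c = sumTt fun a => g a * c := by
  simp only [mul_comm _ c, mul_sumTt]

theorem sumTt_sumTt_mul (f g : ℕ → Ser) :
    (sumTt fun a => sumTt fun b => f a * g b) = sumTt f * sumTt g := by
  simp only [← mul_sumTt, ← sumTt_mul]

theorem dT_sumTt (i : ℕ) (g : ℕ → Ser) : dT i (sumTt g) = g i + sumTt fun a => dT i (g a) := by
  classical
  have hterm : ∀ a, dT i (Tt a * g a) = (Pi.single i (g i) : ℕ → Ser) a + Tt a * dT i (g a) :=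
    fun a => by
      rw [Derivation.leibniz, dT_Tt, smul_eq_mul, smul_eq_mul, add_comm]
      rcases eq_or_ne a i with rfl | ha
      · simp
      · simp [ha]
  change pderiv _ i (locSum _) = _
  rw [pderiv_locSum i (locFinite_Tt_mul g)]
  change locSum (fun a => dT i (Tt a * g a)) = _
  simp only [hterm]
  rw [locSum_add (locFinite_pi_single _ _) (locFinite_Tt_mul _), locSum_pi_single]
  rfl

theorem dx_sumTt (g : ℕ → Ser) : dx (sumTt g) = sumTt fun a => dx (g a) := by
  change coeffDerivation _ (locSum _) = _
  rw [coeffDerivation_locSum _ (locFinite_Tt_mul g)]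
  change locSum (fun a => dx (Tt a * g a)) = _
  simp only [Derivation.leibniz, dx_Tt, smul_eq_mul, mul_zero, add_zero]
  rfl

noncomputable def pairCoeff (a b : ℕ) : ℂ :=
  ((a.factorial : ℂ) * (b.factorial : ℂ) * ((a : ℂ) + (b : ℂ) + 1))⁻¹

noncomputable def oddCoeff (b : ℕ) : ℂ := ((b.factorial : ℂ) * (2 * (b : ℂ) + 1))⁻¹

noncomputable def evenTerm (Q : Ser) (a : ℕ) : Ser := κ (a.factorial : ℂ)⁻¹ * Q ^ (2 * a)

noncomputable def pairTerm (Q : Ser) (a b : ℕ) : Ser := κ (pairCoeff a b) * Q ^ (2 * a + 2 * b + 2)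

noncomputable def oddTerm (Q : Ser) (b : ℕ) : Ser := κ (oddCoeff b) * Q ^ (2 * b + 1)

theorem pairTerm_comm (Q : Ser) (a b : ℕ) : pairTerm Q a b = pairTerm Q b a := by
  rw [pairTerm, pairTerm, pairCoeff, pairCoeff]
  ring_nf

theorem pairCoeff_mul (a b : ℕ) :
    pairCoeff a b * (2 * a + 2 * b + 2) = 2 * ((a.factorial : ℂ)⁻¹ * (b.factorial : ℂ)⁻¹) := by
  have : (a : ℂ) + b + 1 ≠ 0 := by exact_mod_cast Nat.succ_ne_zero (a + b)
  rw [pairCoeff]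
  field_simp

theorem oddCoeff_mul (b : ℕ) : oddCoeff b * (2 * b + 1) = (b.factorial : ℂ)⁻¹ := by
  have : 2 * (b : ℂ) + 1 ≠ 0 := by exact_mod_cast Nat.succ_ne_zero (2 * b)
  rw [oddCoeff]
  field_simp

section QDerivatives

variable (D : Derivation ℂ Ser Ser) (Q : Ser)

theorem derivation_algebraMap_mul_pow_succ (c : ℂ) (n : ℕ) :
    D (κ c * Q ^ (n + 1)) = κ (c * (n + 1)) * Q ^ n * D Q := by
  rw [D.map_algebraMap_mul, D.leibniz_pow, Nat.add_sub_cancel, nsmul_eq_mul, smul_eq_mul,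
    Nat.cast_succ, map_mul, map_add, map_natCast, map_one]
  ring

theorem derivation_pairTerm (a b : ℕ) :
    D (pairTerm Q a b) = evenTerm Q a * (evenTerm Q b * (2 * Q * D Q)) := by
  have hc : pairCoeff a b * ((2 * a + 2 * b + 1 : ℕ) + 1) =
      2 * ((a.factorial : ℂ)⁻¹ * (b.factorial : ℂ)⁻¹) := by
    rw [← pairCoeff_mul]
    push_cast
    ring
  rw [pairTerm, show 2 * a + 2 * b + 2 = (2 * a + 2 * b + 1) + 1 from rfl,
    derivation_algebraMap_mul_pow_succ, hc, evenTerm, evenTerm, map_mul, map_mul, map_ofNat]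
  ring

theorem derivation_oddTerm (b : ℕ) : D (oddTerm Q b) = evenTerm Q b * D Q := by
  have hc : oddCoeff b * ((2 * b : ℕ) + 1) = (b.factorial : ℂ)⁻¹ := by
    rw [← oddCoeff_mul]
    push_cast
    ring
  rw [oddTerm, derivation_algebraMap_mul_pow_succ, hc, evenTerm]

end QDerivatives

noncomputable def evenSum (Q : Ser) : Ser := sumTt (evenTerm Q)

theorem rhsA_eq_locSum (Q : Ser) : rhsA Q = locSum fun a => X a * (Q * evenTerm Q a) := by
  classical
  ext n : 1
  rw [coeff_locSum_eq_sum (s := n.support) fun a h => ?_]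
  · show ∑ a ∈ n.support, PowerSeries.C ((a.factorial : ℂ)⁻¹) *
      coeff (n - Finsupp.single a 1) (Q ^ (2 * a + 1)) = _
    refine Finset.sum_congr rfl fun a ha => ?_
    have hle : Finsupp.single a 1 ≤ n := by
      rw [Finsupp.single_le_iff]
      exact Nat.one_le_iff_ne_zero.mpr (Finsupp.mem_support_iff.mp ha)
    rw [coeff_X_mul, if_pos hle, evenTerm, mul_left_comm, ← C_C_eq_algebraMap, coeff_C_mul,
      ← pow_succ']
  · exact Finsupp.mem_support_iff.mpr fun hn => h (coeff_X_mul_eq_zero hn _)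

theorem rhsA_eq (Q : Ser) : rhsA Q = Q * evenSum Q + Q := by
  classical
  have hX : ∀ a, X a * (Q * evenTerm Q a) =
      Tt a * (Q * evenTerm Q a) + (Pi.single 0 Q : ℕ → Ser) a := by
    intro a
    rcases eq_or_ne a 0 with rfl | ha
    · simp only [Tt, evenTerm, Nat.factorial_zero, Nat.cast_one, inv_one, map_one, mul_zero,
        pow_zero, mul_one, ↓reduceIte, Pi.single_eq_same]
      ring
    · simp [Tt_of_ne_zero ha, ha]
  rw [rhsA_eq_locSum]
  simp only [hX]
  rw [locSum_add (locFinite_Tt_mul _) (locFinite_pi_single _ _), locSum_pi_single, evenSum,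
    mul_sumTt]
  rfl

theorem two_mul_half : 2 * κ 2⁻¹ = 1 := by
  rw [← map_ofNat κ 2, ← map_mul, mul_inv_cancel₀ two_ne_zero, map_one]

theorem half_sq : κ 2⁻¹ ^ 2 = κ 4⁻¹ := by
  rw [← map_pow]
  norm_num

theorem two_mul_mul_evenSum {Q : Ser}
    (hQ : Q = C (PowerSeries.C (-(2⁻¹ : ℂ)) * xA) + rhsA Q) : 2 * Q * evenSum Q = x := by
  rw [rhsA_eq, map_mul, C_C_eq_algebraMap, map_neg, ← x] at hQ
  linear_combination (-2) * hQ + x * two_mul_half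

theorem F0_eq (Q L : Ser) :
    F0 Q L = κ 2⁻¹ * sumTt (fun a => sumTt (pairTerm Q a)) - x * sumTt (oddTerm Q)
      + κ 4⁻¹ * x ^ 2 * L := by
  ext n : 1
  have hpair : ∀ a, coeff n (Tt a * sumTt (pairTerm Q a)) = ∑ b ∈ insert 0 n.support,
      PowerSeries.C (pairCoeff a b) * coeff n (Tt a * Tt b * Q ^ (2 * a + 2 * b + 2)) := by
    intro a
    rw [mul_sumTt, coeff_sumTt]
    refine Finset.sum_congr rfl fun b _ => ?_
    rw [pairTerm, ← C_C_eq_algebraMap, ← coeff_C_mul]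
    congr 1
    ring
  have hodd : ∀ b, coeff n (Tt b * oddTerm Q b) =
      PowerSeries.C (oddCoeff b) * coeff n (Tt b * Q ^ (2 * b + 1)) := by
    intro b
    rw [oddTerm, ← C_C_eq_algebraMap, ← coeff_C_mul]
    congr 1
    ring
  rw [map_add, map_sub, ← C_C_eq_algebraMap, coeff_C_mul, coeff_sumTt, x, coeff_C_mul,
    coeff_sumTt, ← C_C_eq_algebraMap, ← map_pow, ← map_mul, coeff_C_mul]
  simp only [hpair, hodd]
  rw [mul_comm (PowerSeries.C _) (xA ^ 2)]
  rfl

section Derivatives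

variable {Q L : Ser}

theorem F0_chain_terms_cancel (hW : 2 * Q * evenSum Q = x) {δ ε : Ser} (hε : Q * ε = δ) :
    κ 2⁻¹ * (evenSum Q * (evenSum Q * (2 * Q * δ))) - x * (evenSum Q * δ)
      + κ 2⁻¹ ^ 2 * x ^ 2 * ε = 0 := by
  linear_combination (x * evenSum Q - 2 * κ 2⁻¹ * Q * evenSum Q ^ 2) * hε
    + (evenSum Q * Q * ε - κ 2⁻¹ ^ 2 * (2 * Q * evenSum Q + x) * ε) * hW
    + 2 * Q ^ 2 * evenSum Q ^ 2 * ε * (κ 2⁻¹ + 1) * two_mul_half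

theorem dT_F0 (hW : 2 * Q * evenSum Q = x) (hL : ∀ a, Q * dT a L = dT a Q) (b : ℕ) :
    dT b (F0 Q L) = sumTt (pairTerm Q b) - x * oddTerm Q b := by
  have hsymm : (sumTt fun a => pairTerm Q a b) = sumTt (pairTerm Q b) :=
    congrArg sumTt (funext fun a => pairTerm_comm Q a b)
  rw [F0_eq, ← half_sq]
  simp only [map_add, map_sub, Derivation.leibniz, Derivation.map_algebraMap,
    Derivation.leibniz_pow, dT_x, smul_eq_mul, mul_zero, add_zero, dT_sumTt, sumTt_add,
    derivation_pairTerm, derivation_oddTerm, hsymm, sumTt_sumTt_mul, ← sumTt_mul]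
  rw [← evenSum]
  linear_combination F0_chain_terms_cancel hW (hL b) + sumTt (pairTerm Q b) * two_mul_half

theorem dx_F0 (hW : 2 * Q * evenSum Q = x) (hL : Q * dx L = dx Q) :
    dx (F0 Q L) = κ 2⁻¹ * x * L - sumTt (oddTerm Q) := by
  rw [F0_eq, ← half_sq]
  simp only [map_add, map_sub, Derivation.leibniz, Derivation.map_algebraMap,
    Derivation.leibniz_pow, dx_x, smul_eq_mul, mul_zero, add_zero, dx_sumTt,
    derivation_pairTerm, derivation_oddTerm, sumTt_sumTt_mul, ← sumTt_mul]
  rw [← evenSum]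
  linear_combination F0_chain_terms_cancel hW hL + κ 2⁻¹ * x * L * two_mul_half

theorem dT_dT_F0 (hW : 2 * Q * evenSum Q = x) (hL : ∀ a, Q * dT a L = dT a Q) (a b : ℕ) :
    dT a (dT b (F0 Q L)) = pairTerm Q a b := by
  rw [dT_F0 hW hL]
  simp only [map_sub, Derivation.leibniz, dT_x, smul_eq_mul, mul_zero, add_zero, dT_sumTt,
    derivation_pairTerm, derivation_oddTerm, ← mul_sumTt, ← sumTt_mul]
  rw [← evenSum, pairTerm_comm]
  linear_combination (evenTerm Q b * dT a Q) * hW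

theorem dx_dT_F0 (hW : 2 * Q * evenSum Q = x) (hL : ∀ a, Q * dT a L = dT a Q) (b : ℕ) :
    dx (dT b (F0 Q L)) = -oddTerm Q b := by
  rw [dT_F0 hW hL]
  simp only [map_sub, Derivation.leibniz, dx_x, smul_eq_mul, mul_one, dx_sumTt,
    derivation_pairTerm, derivation_oddTerm, ← mul_sumTt, ← sumTt_mul]
  rw [← evenSum]
  linear_combination (evenTerm Q b * dx Q) * hW

theorem dx_dx_F0 (hW : 2 * Q * evenSum Q = x) (hL : Q * dx L = dx Q) :
    dx (dx (F0 Q L)) = κ 2⁻¹ * L := by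
  rw [dx_F0 hW hL]
  simp only [map_sub, Derivation.leibniz, Derivation.map_algebraMap, dx_x, smul_eq_mul,
    mul_one, mul_zero, add_zero, dx_sumTt, derivation_oddTerm, ← sumTt_mul]
  rw [← evenSum]
  linear_combination evenSum Q * hL - κ 2⁻¹ * dx L * hW
    + evenSum Q * Q * dx L * two_mul_half

end Derivatives

end BGW

/-- The genus-zero free energy `F₀` of the generalized BGW model has the second
derivatives `∂²F₀/∂T_{2a+1}∂T_{2b+1} = Q^{2a+2b+2}/(a!b!(a+b+1))`,
`∂²F₀/∂x∂T_{2b+1} = -Q^{2b+1}/(b!(2b+1))` and `∂²F₀/∂x² = (1/2)·log Q`. -/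
theorem stmt10 (Q LQ : MvPowerSeries ℕ (PowerSeries ℂ))
    (hQ : Q = MvPowerSeries.C (σ := ℕ) (R := PowerSeries ℂ) (PowerSeries.C (-(2⁻¹ : ℂ)) * xA)
      + rhsA Q)
    (hLQ : ∀ a : ℕ, Q * pdA a LQ = pdA a Q)
    (hLQx : Q * dXA LQ = dXA Q) :
    (∀ a b : ℕ, pdA a (pdA b (F0 Q LQ))
      = MvPowerSeries.C (σ := ℕ) (R := PowerSeries ℂ)
          (PowerSeries.C (((a.factorial : ℂ) * (b.factorial : ℂ) * ((a : ℂ)+(b : ℂ)+1))⁻¹))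
        * Q ^ (2*a+2*b+2)) ∧
    (∀ b : ℕ, dXA (pdA b (F0 Q LQ))
      = - MvPowerSeries.C (σ := ℕ) (R := PowerSeries ℂ)
          (PowerSeries.C (((b.factorial : ℂ) * (2*(b : ℂ)+1))⁻¹))
        * Q ^ (2*b+1)) ∧
    dXA (dXA (F0 Q LQ))
      = MvPowerSeries.C (σ := ℕ) (R := PowerSeries ℂ) (PowerSeries.C (2⁻¹ : ℂ)) * LQ := by
  have hW := BGW.two_mul_mul_evenSum hQ
  have hLT : ∀ a, Q * BGW.dT a LQ = BGW.dT a Q := fun a => by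
    simpa only [BGW.pdA_eq_dT] using hLQ a
  simp only [BGW.pdA_eq_dT, BGW.dXA_eq_dx, BGW.C_C_eq_algebraMap]
  refine ⟨fun a b => BGW.dT_dT_F0 hW hLT a b, fun b => ?_, BGW.dx_dx_F0 hW hLQx⟩
  rw [BGW.dx_dT_F0 hW hLT b, BGW.oddTerm, neg_mul]
  rfl
end
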